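/- Let (A, μ, Δ) be a finite-dimensional totally associative 3-ary infinitesimal bialgebra. Then (A*, Δ*, μ*) is a totally associative 3-ary infinitesimal bialgebra. -/
import Mathlib
set_option synthInstance.maxHeartbeats 1000000
set_option maxHeartbeats 2000000


open TensorProduct

open TensorProduct in
/-- `(Δ ⊗ id ⊗ id) ∘ Δ`, valued in the left-associated 5-fold tensor power. -/
noncomputable def coD1 {K A : Type*} [Field K] [AddCommGroup A] [Module K A]
    (Δ : A →ₗ[K] (A ⊗[K] A) ⊗[K] A) :
    A →ₗ[K] (((A ⊗[K] A) ⊗[K] A) ⊗[K] A) ⊗[K] A :=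
  (map (map Δ LinearMap.id) LinearMap.id) ∘ₗ Δ

open TensorProduct in
/-- `(id ⊗ Δ ⊗ id) ∘ Δ`, valued in the left-associated 5-fold tensor power. -/
noncomputable def coD2 {K A : Type*} [Field K] [AddCommGroup A] [Module K A]
    (Δ : A →ₗ[K] (A ⊗[K] A) ⊗[K] A) :
    A →ₗ[K] (((A ⊗[K] A) ⊗[K] A) ⊗[K] A) ⊗[K] A :=
  (map ((map (TensorProduct.assoc K A A A).symm.toLinearMap LinearMap.id) ∘ₗ
      (TensorProduct.assoc K A (A ⊗[K] A) A).symm.toLinearMap) LinearMap.id) ∘ₗ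
    (map (map LinearMap.id Δ) LinearMap.id) ∘ₗ Δ

open TensorProduct in
/-- `(id ⊗ id ⊗ Δ) ∘ Δ`, valued in the left-associated 5-fold tensor power. -/
noncomputable def coD3 {K A : Type*} [Field K] [AddCommGroup A] [Module K A]
    (Δ : A →ₗ[K] (A ⊗[K] A) ⊗[K] A) :
    A →ₗ[K] (((A ⊗[K] A) ⊗[K] A) ⊗[K] A) ⊗[K] A :=
  (map (TensorProduct.assoc K (A ⊗[K] A) A A).symm.toLinearMap LinearMap.id) ∘ₗ
    (TensorProduct.assoc K (A ⊗[K] A) (A ⊗[K] A) A).symm.toLinearMap ∘ₗ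
    (map LinearMap.id Δ) ∘ₗ Δ
/-- The middle multiplication `M_μ(x,y)(z) = μ(x,z,y)` as a linear map. -/
noncomputable def Mmul {K A : Type*} [Field K] [AddCommGroup A] [Module K A]
    (μ : A →ₗ[K] A →ₗ[K] A →ₗ[K] A) (x y : A) : A →ₗ[K] A where
  toFun z := μ x z y
  map_add' a b := by simp
  map_smul' c a := by simp

/-- The right multiplication `R_μ(x,y)(z) = μ(z,x,y)` as a linear map. -/
noncomputable def Rmul {K A : Type*} [Field K] [AddCommGroup A] [Module K A]
    (μ : A →ₗ[K] A →ₗ[K] A →ₗ[K] A) (x y : A) : A →ₗ[K] A where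
  toFun z := μ z x y
  map_add' a b := by simp
  map_smul' c a := by simp
open TensorProduct in
/-- The infinitesimal bialgebra compatibility condition
`Δμ(x,y,z) = (L_μ(x,y)⊗id⊗id)Δ(z) + (id⊗M_μ(x,z)⊗id)Δ(y) + (id⊗id⊗R_μ(y,z))Δ(x)`. -/
def Compat {K A : Type*} [Field K] [AddCommGroup A] [Module K A]
    (μ : A →ₗ[K] A →ₗ[K] A →ₗ[K] A) (Δ : A →ₗ[K] (A ⊗[K] A) ⊗[K] A) : Prop :=
  ∀ x y z : A, Δ (μ x y z) =
    (map (map (μ x y) LinearMap.id) LinearMap.id) (Δ z)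
      + (map (map LinearMap.id (Mmul μ x z)) LinearMap.id) (Δ y)
      + (map LinearMap.id (Rmul μ y z)) (Δ x)
/-- The canonical map `A* ⊗ A* ⊗ A* → (A ⊗ A ⊗ A)*`. -/
noncomputable def dd3 (K A : Type*) [Field K] [AddCommGroup A] [Module K A] :
    ((Module.Dual K A) ⊗[K] (Module.Dual K A)) ⊗[K] (Module.Dual K A) →ₗ[K]
      Module.Dual K ((A ⊗[K] A) ⊗[K] A) :=
  (TensorProduct.dualDistrib K (A ⊗[K] A) A) ∘ₗ
    (TensorProduct.map (TensorProduct.dualDistrib K A A) LinearMap.id)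
/-- The dual multiplication `Δ* : A* × A* × A* → A*`, `⟨Δ*(ξ,η,γ), x⟩ = ⟨ξ⊗η⊗γ, Δ(x)⟩`,
as a trilinear map on the dual space. -/
noncomputable def dmu {K A : Type*} [Field K] [AddCommGroup A] [Module K A]
    (Δ : A →ₗ[K] (A ⊗[K] A) ⊗[K] A) :
    Module.Dual K A →ₗ[K] Module.Dual K A →ₗ[K] Module.Dual K A →ₗ[K] Module.Dual K A :=
  TensorProduct.curry (TensorProduct.curry (Δ.dualMap ∘ₗ dd3 K A))


section Stmt18Aux

open TensorProduct

variable {K A : Type*} [Field K] [AddCommGroup A] [Module K A]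

local notation "Dl" => Module.Dual K A

/-- 4-fold pairing `(A*)⊗4 → (A⊗4)*`. -/
noncomputable def P4 (K A : Type*) [Field K] [AddCommGroup A] [Module K A] :
    ((Module.Dual K A ⊗[K] Module.Dual K A) ⊗[K] Module.Dual K A) ⊗[K] Module.Dual K A →ₗ[K]
      Module.Dual K (((A ⊗[K] A) ⊗[K] A) ⊗[K] A) :=
  (TensorProduct.dualDistrib K ((A ⊗[K] A) ⊗[K] A) A) ∘ₗ (map (dd3 K A) LinearMap.id)

/-- 5-fold pairing `(A*)⊗5 → (A⊗5)*`. -/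
noncomputable def P5 (K A : Type*) [Field K] [AddCommGroup A] [Module K A] :
    (((Module.Dual K A ⊗[K] Module.Dual K A) ⊗[K] Module.Dual K A) ⊗[K] Module.Dual K A)
        ⊗[K] Module.Dual K A →ₗ[K]
      Module.Dual K ((((A ⊗[K] A) ⊗[K] A) ⊗[K] A) ⊗[K] A) :=
  (TensorProduct.dualDistrib K (((A ⊗[K] A) ⊗[K] A) ⊗[K] A) A) ∘ₗ (map (P4 K A) LinearMap.id)

lemma dd3_tmul (p : Dl ⊗[K] Dl) (γ : Dl) (q : A ⊗[K] A) (z : A) :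
    dd3 K A (p ⊗ₜ[K] γ) (q ⊗ₜ[K] z) = dualDistrib K A A p q * γ z := by
  simp [dd3]

lemma P4_tmul (t : (Dl ⊗[K] Dl) ⊗[K] Dl) (δ : Dl) (q : (A ⊗[K] A) ⊗[K] A) (u : A) :
    P4 K A (t ⊗ₜ[K] δ) (q ⊗ₜ[K] u) = dd3 K A t q * δ u := by
  simp [P4]

lemma P5_tmul (s : ((Dl ⊗[K] Dl) ⊗[K] Dl) ⊗[K] Dl) (ε : Dl)
    (r : ((A ⊗[K] A) ⊗[K] A) ⊗[K] A) (v : A) :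
    P5 K A (s ⊗ₜ[K] ε) (r ⊗ₜ[K] v) = P4 K A s r * ε v := by
  simp [P5]

lemma dualDistrib_inj (K M N : Type*) [Field K] [AddCommGroup M] [Module K M]
    [AddCommGroup N] [Module K N] [FiniteDimensional K M] [FiniteDimensional K N] :
    Function.Injective (TensorProduct.dualDistrib K M N) :=
  (TensorProduct.dualDistribEquiv K M N).injective

lemma mapid_inj {M N P : Type*} [AddCommGroup M] [Module K M] [AddCommGroup N] [Module K N]
    [AddCommGroup P] [Module K P] (f : M →ₗ[K] N) (hf : Function.Injective f) :
    Function.Injective (map f (LinearMap.id : P →ₗ[K] P)) :=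
  Module.Flat.rTensor_preserves_injective_linearMap f hf

noncomputable def E3 (K A : Type*) [Field K] [AddCommGroup A] [Module K A]
    [FiniteDimensional K A] :
    ((Module.Dual K A ⊗[K] Module.Dual K A) ⊗[K] Module.Dual K A) ≃ₗ[K]
      Module.Dual K ((A ⊗[K] A) ⊗[K] A) :=
  (TensorProduct.congr (TensorProduct.dualDistribEquiv K A A)
      (LinearEquiv.refl K (Module.Dual K A))).trans
    (TensorProduct.dualDistribEquiv K (A ⊗[K] A) A)

noncomputable def E4 (K A : Type*) [Field K] [AddCommGroup A] [Module K A]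
    [FiniteDimensional K A] :
    (((Module.Dual K A ⊗[K] Module.Dual K A) ⊗[K] Module.Dual K A) ⊗[K] Module.Dual K A) ≃ₗ[K]
      Module.Dual K (((A ⊗[K] A) ⊗[K] A) ⊗[K] A) :=
  (TensorProduct.congr (E3 K A) (LinearEquiv.refl K (Module.Dual K A))).trans
    (TensorProduct.dualDistribEquiv K ((A ⊗[K] A) ⊗[K] A) A)

noncomputable def E5e (K A : Type*) [Field K] [AddCommGroup A] [Module K A]
    [FiniteDimensional K A] :
    ((((Module.Dual K A ⊗[K] Module.Dual K A) ⊗[K] Module.Dual K A) ⊗[K] Module.Dual K A)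
        ⊗[K] Module.Dual K A) ≃ₗ[K]
      Module.Dual K ((((A ⊗[K] A) ⊗[K] A) ⊗[K] A) ⊗[K] A) :=
  (TensorProduct.congr (E4 K A) (LinearEquiv.refl K (Module.Dual K A))).trans
    (TensorProduct.dualDistribEquiv K (((A ⊗[K] A) ⊗[K] A) ⊗[K] A) A)

lemma dd3_inj [FiniteDimensional K A] : Function.Injective (dd3 K A) :=
  (E3 K A).injective

lemma P4_inj [FiniteDimensional K A] : Function.Injective (P4 K A) :=
  (E4 K A).injective

lemma P5_inj [FiniteDimensional K A] : Function.Injective (P5 K A) :=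
  (E5e K A).injective

lemma ext5 {M : Type*} [AddCommGroup M] [Module K M]
    (f g : ((((A ⊗[K] A) ⊗[K] A) ⊗[K] A) ⊗[K] A) →ₗ[K] M)
    (h : ∀ x y z u v : A,
      f ((((x ⊗ₜ[K] y) ⊗ₜ[K] z) ⊗ₜ[K] u) ⊗ₜ[K] v) =
      g ((((x ⊗ₜ[K] y) ⊗ₜ[K] z) ⊗ₜ[K] u) ⊗ₜ[K] v)) : f = g := by
  apply TensorProduct.ext'
  intro r v
  induction r using TensorProduct.induction_on with
  | zero => simp
  | add a b iha ihb => simp [add_tmul, map_add, iha, ihb]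
  | tmul q u =>
    induction q using TensorProduct.induction_on with
    | zero => simp
    | add a b iha ihb => simp [add_tmul, map_add, iha, ihb]
    | tmul p z =>
      induction p using TensorProduct.induction_on with
      | zero => simp
      | add a b iha ihb => simp [add_tmul, map_add, iha, ihb]
      | tmul x y => exact h x y z u v

lemma dmu_apply (Δ : A →ₗ[K] (A ⊗[K] A) ⊗[K] A) (ξ η γ : Dl) (a : A) :
    dmu Δ ξ η γ a = dd3 K A ((ξ ⊗ₜ[K] η) ⊗ₜ[K] γ) (Δ a) := by
  simp [dmu, TensorProduct.curry_apply, LinearMap.dualMap_apply]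

lemma Mmul_apply (μ : A →ₗ[K] A →ₗ[K] A →ₗ[K] A) (x y z : A) : Mmul μ x y z = μ x z y := rfl

lemma Rmul_apply (μ : A →ₗ[K] A →ₗ[K] A →ₗ[K] A) (x y z : A) : Rmul μ x y z = μ z x y := rfl

/-- contraction of the first two slots. -/
noncomputable def c12 (ξ η : Dl) : (A ⊗[K] A) ⊗[K] A →ₗ[K] A :=
  (TensorProduct.lid K A).toLinearMap ∘ₗ
    map (TensorProduct.dualDistrib K A A (ξ ⊗ₜ[K] η)) LinearMap.id

/-- contraction of the outer two slots. -/
noncomputable def c13 (ξ γ : Dl) : (A ⊗[K] A) ⊗[K] A →ₗ[K] A :=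
  (TensorProduct.rid K A).toLinearMap ∘ₗ
    map ((TensorProduct.lid K A).toLinearMap ∘ₗ map ξ LinearMap.id) γ

/-- contraction of the last two slots. -/
noncomputable def c23 (η γ : Dl) : (A ⊗[K] A) ⊗[K] A →ₗ[K] A :=
  (TensorProduct.rid K A).toLinearMap ∘ₗ
    map ((TensorProduct.rid K A).toLinearMap ∘ₗ map LinearMap.id η) γ

lemma dd3_c12 (ξ η χ : Dl) (t : (A ⊗[K] A) ⊗[K] A) :
    dd3 K A ((ξ ⊗ₜ[K] η) ⊗ₜ[K] χ) t = χ (c12 ξ η t) := by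
  induction t using TensorProduct.induction_on with
  | zero => simp
  | add a b iha ihb => simp_all [add_tmul, tmul_add, map_add, mul_add, add_mul]
  | tmul p c => simp [dd3_tmul, c12, smul_eq_mul]

lemma dd3_c13 (ξ η γ : Dl) (t : (A ⊗[K] A) ⊗[K] A) :
    dd3 K A ((ξ ⊗ₜ[K] η) ⊗ₜ[K] γ) t = η (c13 ξ γ t) := by
  have hin : ∀ p : A ⊗[K] A, dualDistrib K A A (ξ ⊗ₜ[K] η) p =
      η (((TensorProduct.lid K A).toLinearMap ∘ₗ map ξ LinearMap.id) p) := by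
    intro p
    induction p using TensorProduct.induction_on with
    | zero => simp
    | add a b iha ihb => simp_all [add_tmul, tmul_add, map_add, mul_add, add_mul]
    | tmul a b => simp [smul_eq_mul]
  induction t using TensorProduct.induction_on with
  | zero => simp
  | add a b iha ihb => simp_all [add_tmul, tmul_add, map_add, mul_add, add_mul]
  | tmul p c =>
    simp only [dd3_tmul, c13, LinearMap.comp_apply, map_tmul, LinearEquiv.coe_coe,
      TensorProduct.rid_tmul, map_smul, smul_eq_mul, hin]
    ring

lemma dd3_c23 (ξ η γ : Dl) (t : (A ⊗[K] A) ⊗[K] A) :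
    dd3 K A ((ξ ⊗ₜ[K] η) ⊗ₜ[K] γ) t = ξ (c23 η γ t) := by
  have hin : ∀ p : A ⊗[K] A, dualDistrib K A A (ξ ⊗ₜ[K] η) p =
      ξ (((TensorProduct.rid K A).toLinearMap ∘ₗ map LinearMap.id η) p) := by
    intro p
    induction p using TensorProduct.induction_on with
    | zero => simp
    | add a b iha ihb => simp_all [add_tmul, tmul_add, map_add, mul_add, add_mul]
    | tmul a b => simp [smul_eq_mul, mul_comm]
  induction t using TensorProduct.induction_on with
  | zero => simp
  | add a b iha ihb => simp_all [add_tmul, tmul_add, map_add, mul_add, add_mul]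
  | tmul p c =>
    simp only [dd3_tmul, c23, LinearMap.comp_apply, map_tmul, LinearEquiv.coe_coe,
      TensorProduct.rid_tmul, map_smul, smul_eq_mul, hin]
    ring

/-! ### transform lemmas on the `A`-side (for `Compat`) -/

lemma N1 (f : A →ₗ[K] A) (ξ η γ : Dl) (t : (A ⊗[K] A) ⊗[K] A) :
    dd3 K A ((ξ ⊗ₜ[K] η) ⊗ₜ[K] γ) ((map (map f LinearMap.id) LinearMap.id) t) =
      dd3 K A (((ξ ∘ₗ f) ⊗ₜ[K] η) ⊗ₜ[K] γ) t := by
  have hin : ∀ p : A ⊗[K] A, dualDistrib K A A (ξ ⊗ₜ[K] η) (map f LinearMap.id p) =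
      dualDistrib K A A ((ξ ∘ₗ f) ⊗ₜ[K] η) p := by
    intro p
    induction p using TensorProduct.induction_on with
    | zero => simp
    | add a b iha ihb => simp_all [add_tmul, tmul_add, map_add, mul_add, add_mul]
    | tmul a b => simp
  induction t using TensorProduct.induction_on with
  | zero => simp
  | add a b iha ihb => simp_all [add_tmul, tmul_add, map_add, mul_add, add_mul]
  | tmul p c => simp [dd3_tmul, hin]

lemma N2 (f : A →ₗ[K] A) (ξ η γ : Dl) (t : (A ⊗[K] A) ⊗[K] A) :
    dd3 K A ((ξ ⊗ₜ[K] η) ⊗ₜ[K] γ) ((map (map LinearMap.id f) LinearMap.id) t) =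
      dd3 K A ((ξ ⊗ₜ[K] (η ∘ₗ f)) ⊗ₜ[K] γ) t := by
  have hin : ∀ p : A ⊗[K] A, dualDistrib K A A (ξ ⊗ₜ[K] η) (map LinearMap.id f p) =
      dualDistrib K A A (ξ ⊗ₜ[K] (η ∘ₗ f)) p := by
    intro p
    induction p using TensorProduct.induction_on with
    | zero => simp
    | add a b iha ihb => simp_all [add_tmul, tmul_add, map_add, mul_add, add_mul]
    | tmul a b => simp
  induction t using TensorProduct.induction_on with
  | zero => simp
  | add a b iha ihb => simp_all [add_tmul, tmul_add, map_add, mul_add, add_mul]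
  | tmul p c => simp [dd3_tmul, hin]

lemma N3 (f : A →ₗ[K] A) (ξ η γ : Dl) (t : (A ⊗[K] A) ⊗[K] A) :
    dd3 K A ((ξ ⊗ₜ[K] η) ⊗ₜ[K] γ) ((map LinearMap.id f) t) =
      dd3 K A ((ξ ⊗ₜ[K] η) ⊗ₜ[K] (γ ∘ₗ f)) t := by
  induction t using TensorProduct.induction_on with
  | zero => simp
  | add a b iha ihb => simp_all [add_tmul, tmul_add, map_add, mul_add, add_mul]
  | tmul p c => simp [dd3_tmul]

/-! ### transform lemmas on the dual side (for `Compat` RHS) -/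

lemma M1 (f : Dl →ₗ[K] Dl) (g : A →ₗ[K] A) (hfg : ∀ (χ : Dl) (a : A), f χ a = χ (g a))
    (s : (Dl ⊗[K] Dl) ⊗[K] Dl) (x y z : A) :
    dd3 K A ((map (map f LinearMap.id) LinearMap.id) s) ((x ⊗ₜ[K] y) ⊗ₜ[K] z) =
      dd3 K A s ((g x ⊗ₜ[K] y) ⊗ₜ[K] z) := by
  have hin : ∀ p : Dl ⊗[K] Dl, dualDistrib K A A (map f LinearMap.id p) (x ⊗ₜ[K] y) =
      dualDistrib K A A p (g x ⊗ₜ[K] y) := by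
    intro p
    induction p using TensorProduct.induction_on with
    | zero => simp
    | add a b iha ihb => simp_all [add_tmul, tmul_add, map_add, mul_add, add_mul]
    | tmul ξ η => simp [hfg]
  induction s using TensorProduct.induction_on with
  | zero => simp
  | add a b iha ihb => simp_all [add_tmul, tmul_add, map_add, mul_add, add_mul]
  | tmul p γ => simp [dd3_tmul, hin]

lemma M2 (f : Dl →ₗ[K] Dl) (g : A →ₗ[K] A) (hfg : ∀ (χ : Dl) (a : A), f χ a = χ (g a))
    (s : (Dl ⊗[K] Dl) ⊗[K] Dl) (x y z : A) :
    dd3 K A ((map (map LinearMap.id f) LinearMap.id) s) ((x ⊗ₜ[K] y) ⊗ₜ[K] z) =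
      dd3 K A s ((x ⊗ₜ[K] g y) ⊗ₜ[K] z) := by
  have hin : ∀ p : Dl ⊗[K] Dl, dualDistrib K A A (map LinearMap.id f p) (x ⊗ₜ[K] y) =
      dualDistrib K A A p (x ⊗ₜ[K] g y) := by
    intro p
    induction p using TensorProduct.induction_on with
    | zero => simp
    | add a b iha ihb => simp_all [add_tmul, tmul_add, map_add, mul_add, add_mul]
    | tmul ξ η => simp [hfg]
  induction s using TensorProduct.induction_on with
  | zero => simp
  | add a b iha ihb => simp_all [add_tmul, tmul_add, map_add, mul_add, add_mul]
  | tmul p γ => simp [dd3_tmul, hin]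

lemma M3 (f : Dl →ₗ[K] Dl) (g : A →ₗ[K] A) (hfg : ∀ (χ : Dl) (a : A), f χ a = χ (g a))
    (s : (Dl ⊗[K] Dl) ⊗[K] Dl) (x y z : A) :
    dd3 K A ((map LinearMap.id f) s) ((x ⊗ₜ[K] y) ⊗ₜ[K] z) =
      dd3 K A s ((x ⊗ₜ[K] y) ⊗ₜ[K] g z) := by
  induction s using TensorProduct.induction_on with
  | zero => simp
  | add a b iha ihb => simp_all [add_tmul, tmul_add, map_add, mul_add, add_mul]
  | tmul p γ => simp [dd3_tmul, hfg]


/-! ### `A`-side quintuple lemmas (for associativity of `dmu`) -/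

lemma A1 (Δ : A →ₗ[K] (A ⊗[K] A) ⊗[K] A) (ξ η γ δ ε : Dl) (t : (A ⊗[K] A) ⊗[K] A) :
    dd3 K A (((dmu Δ ξ η γ) ⊗ₜ[K] δ) ⊗ₜ[K] ε) t =
      P5 K A ((((ξ ⊗ₜ[K] η) ⊗ₜ[K] γ) ⊗ₜ[K] δ) ⊗ₜ[K] ε)
        ((map (map Δ LinearMap.id) LinearMap.id) t) := by
  induction t using TensorProduct.induction_on with
  | zero => simp
  | add a b iha ihb => simp_all [add_tmul, tmul_add, map_add, mul_add, add_mul]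
  | tmul p c =>
    induction p using TensorProduct.induction_on with
    | zero => simp
    | add a b iha ihb => simp_all [add_tmul, tmul_add, map_add, mul_add, add_mul]
    | tmul a b =>
      simp only [map_tmul, LinearMap.id_coe, id_eq, dd3_tmul, P5_tmul, P4_tmul,
        dualDistrib_apply, dmu_apply]
      try ring

lemma A2 (Δ : A →ₗ[K] (A ⊗[K] A) ⊗[K] A) (ξ η γ δ ε : Dl) (t : (A ⊗[K] A) ⊗[K] A) :
    dd3 K A ((ξ ⊗ₜ[K] (dmu Δ η γ δ)) ⊗ₜ[K] ε) t =
      P5 K A ((((ξ ⊗ₜ[K] η) ⊗ₜ[K] γ) ⊗ₜ[K] δ) ⊗ₜ[K] ε)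
        ((map ((map (TensorProduct.assoc K A A A).symm.toLinearMap LinearMap.id) ∘ₗ
            (TensorProduct.assoc K A (A ⊗[K] A) A).symm.toLinearMap) LinearMap.id)
          ((map (map LinearMap.id Δ) LinearMap.id) t)) := by
  have S2 : ∀ (a c : A) (u : (A ⊗[K] A) ⊗[K] A),
      P5 K A ((((ξ ⊗ₜ[K] η) ⊗ₜ[K] γ) ⊗ₜ[K] δ) ⊗ₜ[K] ε)
        ((((map (TensorProduct.assoc K A A A).symm.toLinearMap LinearMap.id) ∘ₗ
            (TensorProduct.assoc K A (A ⊗[K] A) A).symm.toLinearMap) (a ⊗ₜ[K] u)) ⊗ₜ[K] c) =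
      ξ a * dd3 K A ((η ⊗ₜ[K] γ) ⊗ₜ[K] δ) u * ε c := by
    intro a c u
    induction u using TensorProduct.induction_on with
    | zero => simp
    | add u1 u2 ih1 ih2 =>
      simp_all [tmul_add, add_tmul, map_add, mul_add, add_mul, LinearMap.comp_apply]
    | tmul q d =>
      induction q using TensorProduct.induction_on with
      | zero => simp
      | add q1 q2 ih1 ih2 =>
        simp_all [tmul_add, add_tmul, map_add, mul_add, add_mul, LinearMap.comp_apply]
      | tmul r s =>
        simp only [LinearMap.comp_apply, assoc_symm_tmul, LinearEquiv.coe_coe, map_tmul,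
          LinearMap.id_coe, id_eq, P5_tmul, P4_tmul, dd3_tmul, dualDistrib_apply]
        try ring
  induction t using TensorProduct.induction_on with
  | zero => simp
  | add a b iha ihb => simp_all [add_tmul, tmul_add, map_add, mul_add, add_mul]
  | tmul p c =>
    induction p using TensorProduct.induction_on with
    | zero => simp
    | add a b iha ihb => simp_all [add_tmul, tmul_add, map_add, mul_add, add_mul]
    | tmul a b =>
      simp only [map_tmul, LinearMap.id_coe, id_eq]
      rw [S2]
      simp only [dd3_tmul, dualDistrib_apply, dmu_apply]
      try ring

lemma A3 (Δ : A →ₗ[K] (A ⊗[K] A) ⊗[K] A) (ξ η γ δ ε : Dl) (t : (A ⊗[K] A) ⊗[K] A) :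
    dd3 K A ((ξ ⊗ₜ[K] η) ⊗ₜ[K] (dmu Δ γ δ ε)) t =
      P5 K A ((((ξ ⊗ₜ[K] η) ⊗ₜ[K] γ) ⊗ₜ[K] δ) ⊗ₜ[K] ε)
        ((map (TensorProduct.assoc K (A ⊗[K] A) A A).symm.toLinearMap LinearMap.id)
          ((TensorProduct.assoc K (A ⊗[K] A) (A ⊗[K] A) A).symm.toLinearMap
            ((map LinearMap.id Δ) t))) := by
  have S3 : ∀ (p : A ⊗[K] A) (u : (A ⊗[K] A) ⊗[K] A),
      P5 K A ((((ξ ⊗ₜ[K] η) ⊗ₜ[K] γ) ⊗ₜ[K] δ) ⊗ₜ[K] ε)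
        ((map (TensorProduct.assoc K (A ⊗[K] A) A A).symm.toLinearMap LinearMap.id)
          ((TensorProduct.assoc K (A ⊗[K] A) (A ⊗[K] A) A).symm.toLinearMap (p ⊗ₜ[K] u))) =
      dualDistrib K A A (ξ ⊗ₜ[K] η) p * dd3 K A ((γ ⊗ₜ[K] δ) ⊗ₜ[K] ε) u := by
    intro p u
    induction u using TensorProduct.induction_on with
    | zero => simp
    | add u1 u2 ih1 ih2 =>
      simp_all [tmul_add, add_tmul, map_add, mul_add, add_mul, LinearMap.comp_apply]
    | tmul q d =>
      induction q using TensorProduct.induction_on with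
      | zero => simp
      | add q1 q2 ih1 ih2 =>
        simp_all [tmul_add, add_tmul, map_add, mul_add, add_mul, LinearMap.comp_apply]
      | tmul r s =>
        simp only [assoc_symm_tmul, LinearEquiv.coe_coe, map_tmul, LinearMap.id_coe, id_eq,
          P5_tmul, P4_tmul, dd3_tmul, dualDistrib_apply]
        ring
  induction t using TensorProduct.induction_on with
  | zero => simp
  | add a b iha ihb => simp_all [add_tmul, tmul_add, map_add, mul_add, add_mul]
  | tmul p c =>
    simp only [map_tmul, LinearMap.id_coe, id_eq]
    rw [S3]
    simp only [dd3_tmul, dmu_apply]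

/-! ### dual-side quintuple lemmas (for coassociativity of `D`) -/

lemma Q1 (μ : A →ₗ[K] A →ₗ[K] A →ₗ[K] A)
    (D : Dl →ₗ[K] (Dl ⊗[K] Dl) ⊗[K] Dl)
    (hD : ∀ (ξ : Dl) (x y z : A), dd3 K A (D ξ) ((x ⊗ₜ[K] y) ⊗ₜ[K] z) = ξ (μ x y z))
    (s : (Dl ⊗[K] Dl) ⊗[K] Dl) (x y z u v : A) :
    P5 K A ((map (map D LinearMap.id) LinearMap.id) s)
        ((((x ⊗ₜ[K] y) ⊗ₜ[K] z) ⊗ₜ[K] u) ⊗ₜ[K] v) =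
      dd3 K A s (((μ x y z) ⊗ₜ[K] u) ⊗ₜ[K] v) := by
  induction s using TensorProduct.induction_on with
  | zero => simp
  | add a b iha ihb => simp_all [add_tmul, tmul_add, map_add, mul_add, add_mul]
  | tmul p γ =>
    induction p using TensorProduct.induction_on with
    | zero => simp
    | add a b iha ihb => simp_all [add_tmul, tmul_add, map_add, mul_add, add_mul]
    | tmul ξ η =>
      simp only [map_tmul, LinearMap.id_coe, id_eq, P5_tmul, P4_tmul, dd3_tmul,
        dualDistrib_apply, hD]
      try ring

lemma Q2 (μ : A →ₗ[K] A →ₗ[K] A →ₗ[K] A)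
    (D : Dl →ₗ[K] (Dl ⊗[K] Dl) ⊗[K] Dl)
    (hD : ∀ (ξ : Dl) (x y z : A), dd3 K A (D ξ) ((x ⊗ₜ[K] y) ⊗ₜ[K] z) = ξ (μ x y z))
    (s : (Dl ⊗[K] Dl) ⊗[K] Dl) (x y z u v : A) :
    P5 K A ((map ((map (TensorProduct.assoc K Dl Dl Dl).symm.toLinearMap LinearMap.id) ∘ₗ
          (TensorProduct.assoc K Dl (Dl ⊗[K] Dl) Dl).symm.toLinearMap) LinearMap.id)
        ((map (map LinearMap.id D) LinearMap.id) s))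
        ((((x ⊗ₜ[K] y) ⊗ₜ[K] z) ⊗ₜ[K] u) ⊗ₜ[K] v) =
      dd3 K A s ((x ⊗ₜ[K] (μ y z u)) ⊗ₜ[K] v) := by
  have S2 : ∀ (ξ γ : Dl) (t : (Dl ⊗[K] Dl) ⊗[K] Dl),
      P5 K A ((((map (TensorProduct.assoc K Dl Dl Dl).symm.toLinearMap LinearMap.id) ∘ₗ
          (TensorProduct.assoc K Dl (Dl ⊗[K] Dl) Dl).symm.toLinearMap) (ξ ⊗ₜ[K] t)) ⊗ₜ[K] γ)
        ((((x ⊗ₜ[K] y) ⊗ₜ[K] z) ⊗ₜ[K] u) ⊗ₜ[K] v) =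
      ξ x * dd3 K A t ((y ⊗ₜ[K] z) ⊗ₜ[K] u) * γ v := by
    intro ξ γ t
    induction t using TensorProduct.induction_on with
    | zero => simp
    | add t1 t2 ih1 ih2 =>
      simp_all [tmul_add, add_tmul, map_add, mul_add, add_mul, LinearMap.comp_apply]
    | tmul q d =>
      induction q using TensorProduct.induction_on with
      | zero => simp
      | add q1 q2 ih1 ih2 =>
        simp_all [tmul_add, add_tmul, map_add, mul_add, add_mul, LinearMap.comp_apply]
      | tmul r w =>
        simp only [LinearMap.comp_apply, assoc_symm_tmul, LinearEquiv.coe_coe, map_tmul,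
          LinearMap.id_coe, id_eq, P5_tmul, P4_tmul, dd3_tmul, dualDistrib_apply]
        try ring
  induction s using TensorProduct.induction_on with
  | zero => simp
  | add a b iha ihb => simp_all [add_tmul, tmul_add, map_add, mul_add, add_mul]
  | tmul p γ =>
    induction p using TensorProduct.induction_on with
    | zero => simp
    | add a b iha ihb => simp_all [add_tmul, tmul_add, map_add, mul_add, add_mul]
    | tmul ξ η =>
      simp only [map_tmul, LinearMap.id_coe, id_eq]
      rw [S2]
      simp only [hD, dd3_tmul, dualDistrib_apply]
      try ring

lemma Q3 (μ : A →ₗ[K] A →ₗ[K] A →ₗ[K] A)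
    (D : Dl →ₗ[K] (Dl ⊗[K] Dl) ⊗[K] Dl)
    (hD : ∀ (ξ : Dl) (x y z : A), dd3 K A (D ξ) ((x ⊗ₜ[K] y) ⊗ₜ[K] z) = ξ (μ x y z))
    (s : (Dl ⊗[K] Dl) ⊗[K] Dl) (x y z u v : A) :
    P5 K A ((map (TensorProduct.assoc K (Dl ⊗[K] Dl) Dl Dl).symm.toLinearMap LinearMap.id)
        ((TensorProduct.assoc K (Dl ⊗[K] Dl) (Dl ⊗[K] Dl) Dl).symm.toLinearMap
          ((map LinearMap.id D) s)))
        ((((x ⊗ₜ[K] y) ⊗ₜ[K] z) ⊗ₜ[K] u) ⊗ₜ[K] v) =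
      dd3 K A s ((x ⊗ₜ[K] y) ⊗ₜ[K] (μ z u v)) := by
  have S3 : ∀ (p : Dl ⊗[K] Dl) (t : (Dl ⊗[K] Dl) ⊗[K] Dl),
      P5 K A ((map (TensorProduct.assoc K (Dl ⊗[K] Dl) Dl Dl).symm.toLinearMap LinearMap.id)
          ((TensorProduct.assoc K (Dl ⊗[K] Dl) (Dl ⊗[K] Dl) Dl).symm.toLinearMap (p ⊗ₜ[K] t)))
          ((((x ⊗ₜ[K] y) ⊗ₜ[K] z) ⊗ₜ[K] u) ⊗ₜ[K] v) =
      dualDistrib K A A p (x ⊗ₜ[K] y) * dd3 K A t ((z ⊗ₜ[K] u) ⊗ₜ[K] v) := by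
    intro p t
    induction t using TensorProduct.induction_on with
    | zero => simp
    | add t1 t2 ih1 ih2 =>
      simp_all [tmul_add, add_tmul, map_add, mul_add, add_mul, LinearMap.comp_apply]
    | tmul q d =>
      induction q using TensorProduct.induction_on with
      | zero => simp
      | add q1 q2 ih1 ih2 =>
        simp_all [tmul_add, add_tmul, map_add, mul_add, add_mul, LinearMap.comp_apply]
      | tmul r w =>
        simp only [assoc_symm_tmul, LinearEquiv.coe_coe, map_tmul, LinearMap.id_coe, id_eq,
          P5_tmul, P4_tmul, dd3_tmul, dualDistrib_apply]
        ring
  induction s using TensorProduct.induction_on with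
  | zero => simp
  | add a b iha ihb => simp_all [add_tmul, tmul_add, map_add, mul_add, add_mul]
  | tmul p γ =>
    simp only [map_tmul, LinearMap.id_coe, id_eq]
    rw [S3]
    simp only [hD, dd3_tmul]

end Stmt18Aux

/-- the dual of a finite-dimensional totally associative 3-ary infinitesimal
bialgebra (A, μ, Δ) is a totally associative 3-ary infinitesimal bialgebra (A*, Δ*, μ*). -/
theorem stmt18 {K A : Type*} [Field K] [AddCommGroup A] [Module K A]
    [FiniteDimensional K A]
    (μ : A →ₗ[K] A →ₗ[K] A →ₗ[K] A) (Δ : A →ₗ[K] (A ⊗[K] A) ⊗[K] A)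
    (hμ : ∀ x y z u v : A,
      μ (μ x y z) u v = μ x (μ y z u) v ∧ μ x (μ y z u) v = μ x y (μ z u v))
    (hΔ : coD1 Δ = coD2 Δ ∧ coD2 Δ = coD3 Δ)
    (hc : Compat μ Δ)
    (D : Module.Dual K A →ₗ[K]
      ((Module.Dual K A) ⊗[K] (Module.Dual K A)) ⊗[K] (Module.Dual K A))
    (hD : ∀ (ξ : Module.Dual K A) (x y z : A),
      dd3 K A (D ξ) ((x ⊗ₜ[K] y) ⊗ₜ[K] z) = ξ (μ x y z)) :
    (∀ ξ η γ δ ε : Module.Dual K A,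
      dmu Δ (dmu Δ ξ η γ) δ ε = dmu Δ ξ (dmu Δ η γ δ) ε ∧
      dmu Δ ξ (dmu Δ η γ δ) ε = dmu Δ ξ η (dmu Δ γ δ ε)) ∧
    (coD1 D = coD2 D ∧ coD2 D = coD3 D) ∧
    Compat (dmu Δ) D := by
  obtain ⟨hΔ1, hΔ2⟩ := hΔ
  refine ⟨?_, ⟨?_, ?_⟩, ?_⟩
  · -- total associativity of `dmu Δ`
    intro ξ η γ δ ε
    constructor
    · ext a
      rw [dmu_apply, dmu_apply, A1 Δ ξ η γ δ ε (Δ a), A2 Δ ξ η γ δ ε (Δ a)]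
      exact congrArg (fun w => P5 K A ((((ξ ⊗ₜ[K] η) ⊗ₜ[K] γ) ⊗ₜ[K] δ) ⊗ₜ[K] ε) w)
        (LinearMap.congr_fun hΔ1 a)
    · ext a
      rw [dmu_apply, dmu_apply, A2 Δ ξ η γ δ ε (Δ a), A3 Δ ξ η γ δ ε (Δ a)]
      exact congrArg (fun w => P5 K A ((((ξ ⊗ₜ[K] η) ⊗ₜ[K] γ) ⊗ₜ[K] δ) ⊗ₜ[K] ε) w)
        (LinearMap.congr_fun hΔ2 a)
  · -- coD1 D = coD2 D
    refine LinearMap.ext fun ξ => ?_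
    apply P5_inj
    refine ext5 _ _ fun x y z u v => ?_
    have e1 : coD1 D ξ = (map (map D LinearMap.id) LinearMap.id) (D ξ) := rfl
    have e2 : coD2 D ξ =
        (map ((map (TensorProduct.assoc K (Module.Dual K A) (Module.Dual K A)
              (Module.Dual K A)).symm.toLinearMap LinearMap.id) ∘ₗ
            (TensorProduct.assoc K (Module.Dual K A)
              ((Module.Dual K A) ⊗[K] (Module.Dual K A))
              (Module.Dual K A)).symm.toLinearMap) LinearMap.id)
          ((map (map LinearMap.id D) LinearMap.id) (D ξ)) := rfl
    rw [e1, e2, Q1 μ D hD (D ξ) x y z u v, Q2 μ D hD (D ξ) x y z u v,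
      hD ξ (μ x y z) u v, hD ξ x (μ y z u) v]
    exact congrArg ξ (hμ x y z u v).1
  · -- coD2 D = coD3 D
    refine LinearMap.ext fun ξ => ?_
    apply P5_inj
    refine ext5 _ _ fun x y z u v => ?_
    have e2 : coD2 D ξ =
        (map ((map (TensorProduct.assoc K (Module.Dual K A) (Module.Dual K A)
              (Module.Dual K A)).symm.toLinearMap LinearMap.id) ∘ₗ
            (TensorProduct.assoc K (Module.Dual K A)
              ((Module.Dual K A) ⊗[K] (Module.Dual K A))
              (Module.Dual K A)).symm.toLinearMap) LinearMap.id)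
          ((map (map LinearMap.id D) LinearMap.id) (D ξ)) := rfl
    have e3 : coD3 D ξ =
        (map (TensorProduct.assoc K ((Module.Dual K A) ⊗[K] (Module.Dual K A))
            (Module.Dual K A) (Module.Dual K A)).symm.toLinearMap LinearMap.id)
          ((TensorProduct.assoc K ((Module.Dual K A) ⊗[K] (Module.Dual K A))
              ((Module.Dual K A) ⊗[K] (Module.Dual K A))
              (Module.Dual K A)).symm.toLinearMap
            ((map LinearMap.id D) (D ξ))) := rfl
    rw [e2, e3, Q2 μ D hD (D ξ) x y z u v, Q3 μ D hD (D ξ) x y z u v,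
      hD ξ x (μ y z u) v, hD ξ x y (μ z u v)]
    exact congrArg ξ (hμ x y z u v).2
  · -- compatibility for the dual structure
    intro ξ η γ
    have hfgL : ∀ (χ : Module.Dual K A) (a : A),
        dmu Δ ξ η χ a = χ ((c12 ξ η ∘ₗ Δ) a) := by
      intro χ a; rw [dmu_apply, dd3_c12]; rfl
    have hfgM : ∀ (χ : Module.Dual K A) (a : A),
        Mmul (dmu Δ) ξ γ χ a = χ ((c13 ξ γ ∘ₗ Δ) a) := by
      intro χ a; rw [Mmul_apply, dmu_apply, dd3_c13]; rfl
    have hfgR : ∀ (χ : Module.Dual K A) (a : A),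
        Rmul (dmu Δ) η γ χ a = χ ((c23 η γ ∘ₗ Δ) a) := by
      intro χ a; rw [Rmul_apply, dmu_apply, dd3_c23]; rfl
    apply dd3_inj
    refine TensorProduct.ext_threefold fun x y z => ?_
    have t1 : dd3 K A ((ξ ⊗ₜ[K] η) ⊗ₜ[K] γ)
        ((map (map (μ x y) LinearMap.id) LinearMap.id) (Δ z)) =
        ξ (μ x y (c23 η γ (Δ z))) := by
      rw [N1, dd3_c23]; rfl
    have t2 : dd3 K A ((ξ ⊗ₜ[K] η) ⊗ₜ[K] γ)
        ((map (map LinearMap.id (Mmul μ x z)) LinearMap.id) (Δ y)) =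
        η (μ x (c13 ξ γ (Δ y)) z) := by
      rw [N2, dd3_c13]; rfl
    have t3 : dd3 K A ((ξ ⊗ₜ[K] η) ⊗ₜ[K] γ)
        ((map LinearMap.id (Rmul μ y z)) (Δ x)) =
        γ (μ (c12 ξ η (Δ x)) y z) := by
      rw [N3, dd3_c12]; rfl
    have r1 : dd3 K A ((map (map (dmu Δ ξ η) LinearMap.id) LinearMap.id) (D γ))
        ((x ⊗ₜ[K] y) ⊗ₜ[K] z) = γ (μ (c12 ξ η (Δ x)) y z) := by
      rw [M1 (dmu Δ ξ η) (c12 ξ η ∘ₗ Δ) hfgL (D γ) x y z, hD]; rfl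
    have r2 : dd3 K A ((map (map LinearMap.id (Mmul (dmu Δ) ξ γ)) LinearMap.id) (D η))
        ((x ⊗ₜ[K] y) ⊗ₜ[K] z) = η (μ x (c13 ξ γ (Δ y)) z) := by
      rw [M2 (Mmul (dmu Δ) ξ γ) (c13 ξ γ ∘ₗ Δ) hfgM (D η) x y z, hD]; rfl
    have r3 : dd3 K A ((map LinearMap.id (Rmul (dmu Δ) η γ)) (D ξ))
        ((x ⊗ₜ[K] y) ⊗ₜ[K] z) = ξ (μ x y (c23 η γ (Δ z))) := by
      rw [M3 (Rmul (dmu Δ) η γ) (c23 η γ ∘ₗ Δ) hfgR (D ξ) x y z, hD]; rfl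
    rw [hD (dmu Δ ξ η γ) x y z, dmu_apply, hc x y z]
    simp only [map_add, LinearMap.add_apply]
    rw [t1, t2, t3, r1, r2, r3]
    ring
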